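/- Let ĉord and cord be functions on pairs of distinct indices in [d] with |ĉord(i,j) − cord(i,j)| ≤ τ for all i ≠ j, where cord(i,j) = 0 whenever i ∼ j under a partition G* and cord(i,j) ≥ Δ whenever i ≁ j. If τ ≤ ε < Δ − τ, then the greedy PARTITION procedure, which repeatedly extracts the pair (i,j) minimizing ĉord among remaining indices and forms the cluster {k remaining : min(ĉord(i,k), ĉord(j,k)) ≤ ε} (or the singleton {i} if ĉord(i,j) > ε), outputs exactly the blocks of G*. -/
import Mathlib


/-- A run of the greedy PARTITION procedure with dissimilarity `chat` and
threshold `ε`: `PartitionRun chat ε S L` means that, starting from the set of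
remaining indices `S`, the procedure can output the list of clusters `L`. -/
inductive PartitionRun {d : ℕ} (chat : Fin d → Fin d → ℝ) (ε : ℝ) :
    Finset (Fin d) → List (Finset (Fin d)) → Prop
  | nil : PartitionRun chat ε ∅ []
  | single (i : Fin d) : PartitionRun chat ε {i} [{i}]
  | step (S : Finset (Fin d)) (hS : 2 ≤ S.card) (i j : Fin d)
      (hi : i ∈ S) (hj : j ∈ S) (hij : i ≠ j)
      (hmin : ∀ a ∈ S, ∀ b ∈ S, a ≠ b → chat i j ≤ chat a b)
      (G : Finset (Fin d))
      (hgt : ε < chat i j → G = {i})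
      (hle : chat i j ≤ ε → G = S.filter (fun k => min (chat i k) (chat j k) ≤ ε))
      (L : List (Finset (Fin d)))
      (htail : PartitionRun chat ε (S \ G) L) :
      PartitionRun chat ε S (G :: L)

/-- Correctness of PARTITION: if `chat` approximates, within error `τ`, a
dissimilarity `cord` that vanishes within blocks of `G⋆` (given by the membership
map `z`) and is at least `Δ` across blocks, and `τ ≤ ε < Δ − τ`, then any run of
the procedure started from all of `[d]` outputs exactly the blocks of `G⋆`. -/
theorem stmt9 {d K : ℕ} (chat cord : Fin d → Fin d → ℝ)
    (z : Fin d → Fin K) (hsurj : Function.Surjective z)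
    (τ Δ ε : ℝ) (hτ : 0 ≤ τ)
    (happrox : ∀ i j : Fin d, i ≠ j → |chat i j - cord i j| ≤ τ)
    (hsame : ∀ i j : Fin d, i ≠ j → z i = z j → cord i j = 0)
    (hdiff : ∀ i j : Fin d, z i ≠ z j → Δ ≤ cord i j)
    (hε1 : τ ≤ ε) (hε2 : ε < Δ - τ)
    (L : List (Finset (Fin d)))
    (hrun : PartitionRun chat ε Finset.univ L) :
    ∀ G : Finset (Fin d),
      G ∈ L ↔ ∃ k : Fin K, G = Finset.univ.filter (fun i => z i = k) := by
  have hkey : ∀ i j : Fin d, i ≠ j → (chat i j ≤ ε ↔ z i = z j) := by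
    intro i j hij
    have h2 := abs_le.mp (happrox i j hij)
    constructor
    · intro h
      by_contra hne
      have h1 := hdiff i j hne
      linarith [h2.1, h2.2]
    · intro h
      have h0 := hsame i j hij h
      linarith [h2.1, h2.2]
  suffices H : ∀ (S : Finset (Fin d)) (L : List (Finset (Fin d))),
      PartitionRun chat ε S L →
      (∀ a ∈ S, ∀ b, z b = z a → b ∈ S) →
      ∀ G, (G ∈ L ↔ ∃ k, (∃ a ∈ S, z a = k) ∧
        G = Finset.univ.filter (fun m => z m = k)) by
    intro G
    rw [H _ _ hrun (fun a _ b _ => Finset.mem_univ b) G]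
    constructor
    · rintro ⟨k, _, hG⟩; exact ⟨k, hG⟩
    · rintro ⟨k, hG⟩
      obtain ⟨a, ha⟩ := hsurj k
      exact ⟨k, ⟨a, Finset.mem_univ a, ha⟩, hG⟩
  intro S L hrun
  induction hrun with
  | nil => intro _ G; simp
  | single i =>
      intro hclosed G
      have hblock : Finset.univ.filter (fun m => z m = z i) = {i} := by
        ext x
        simp only [Finset.mem_filter, Finset.mem_univ, true_and, Finset.mem_singleton]
        constructor
        · intro hx
          have := hclosed i (Finset.mem_singleton_self i) x hx
          simpa using this
        · rintro rfl; rfl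
      simp only [List.mem_singleton]
      constructor
      · rintro rfl
        exact ⟨z i, ⟨i, Finset.mem_singleton_self i, rfl⟩, hblock.symm⟩
      · rintro ⟨k, ⟨a, ha, rfl⟩, rfl⟩
        have : a = i := by simpa using ha
        subst this
        exact hblock
  | step S hS i j hi hj hij hmin G hgt hle L htail ih =>
      intro hclosed G'
      have hGblock : G = Finset.univ.filter (fun m => z m = z i) := by
        by_cases hc : chat i j ≤ ε
        · have hzij : z i = z j := (hkey i j hij).mp hc
          rw [hle hc]
          ext x
          simp only [Finset.mem_filter, Finset.mem_univ, true_and]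
          constructor
          · rintro ⟨hxS, hminx⟩
            by_cases hxi : x = i
            · subst hxi; rfl
            by_cases hxj : x = j
            · subst hxj; exact hzij.symm
            rcases min_le_iff.mp hminx with h | h
            · exact ((hkey i x (fun e => hxi e.symm)).mp h).symm
            · exact (((hkey j x (fun e => hxj e.symm)).mp h).symm).trans hzij.symm
          · intro hzx
            refine ⟨hclosed i hi x hzx, ?_⟩
            by_cases hxi : x = i
            · subst hxi
              have : chat j x ≤ ε := (hkey j x (fun e => hij e.symm)).mpr hzij.symm
              exact le_trans (min_le_right _ _) this
            · have : chat i x ≤ ε := (hkey i x (fun e => hxi e.symm)).mpr hzx.symm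
              exact le_trans (min_le_left _ _) this
        · push_neg at hc
          rw [hgt hc]
          ext x
          simp only [Finset.mem_filter, Finset.mem_univ, true_and, Finset.mem_singleton]
          constructor
          · rintro rfl; rfl
          · intro hzx
            by_contra hxi
            have hxS : x ∈ S := hclosed i hi x hzx
            have h1 : chat i x ≤ ε := (hkey i x (fun e => hxi e.symm)).mpr hzx.symm
            have h2 := hmin i hi x hxS (fun e => hxi e.symm)
            linarith
      have hiG : i ∈ G := by
        rw [hGblock]; simp
      have hclosed' : ∀ a ∈ S \ G, ∀ b, z b = z a → b ∈ S \ G := by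
        intro a ha b hb
        rw [Finset.mem_sdiff] at ha ⊢
        refine ⟨hclosed a ha.1 b hb, ?_⟩
        intro hbG
        apply ha.2
        rw [hGblock] at hbG ⊢
        simp only [Finset.mem_filter, Finset.mem_univ, true_and] at hbG ⊢
        exact hb ▸ hbG
      have IH := ih hclosed'
      simp only [List.mem_cons]
      constructor
      · rintro (rfl | hG')
        · exact ⟨z i, ⟨i, hi, rfl⟩, hGblock⟩
        · obtain ⟨k, ⟨a, ha, hk⟩, hG''⟩ := (IH G').mp hG'
          exact ⟨k, ⟨a, (Finset.mem_sdiff.mp ha).1, hk⟩, hG''⟩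
      · rintro ⟨k, ⟨a, haS, rfl⟩, hG''⟩
        by_cases hza : z a = z i
        · left; rw [hG'', hGblock, hza]
        · right
          refine (IH G').mpr ⟨z a, ⟨a, ?_, rfl⟩, hG''⟩
          rw [Finset.mem_sdiff]
          refine ⟨haS, ?_⟩
          intro haG
          rw [hGblock] at haG
          simp only [Finset.mem_filter, Finset.mem_univ, true_and] at haG
          exact hza haG
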